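/- arXiv:quant-ph/0411098 — 3 statements merged into one kernel-verified Lean document; each statement's English description precedes it below -/
import Mathlib

section
/- Fix $x \in \{0,1,2,3\}^N$ having exactly $k$ coordinates equal to $0$. Then $\sum_{y \in \{1,2,3\}^N} (-1)^{\#\{i : y_i = x_i\}} = 3^k \ge 1$. In particular the sum is always positive. -/
lemma mem_123_iff (a : Fin 4) : a ∈ ({1,2,3} : Finset (Fin 4)) ↔ a ≠ 0 := by
  revert a; decide

lemma coord_sum (c : Fin 4) :
    (∑ a ∈ ({1,2,3} : Finset (Fin 4)), (if a = c then (-1 : ℤ) else 1))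
      = if c = 0 then 3 else 1 := by
  revert c; decide

/-- For `x ∈ {0,1,2,3}^N` with exactly `k` zero coordinates, the signed sum over the
sub-hypercube of points with all coordinates nonzero equals `3^k ≥ 1`. -/
theorem signed_sum_cube_general (N k : ℕ) (x : Fin N → Fin 4)
    (hk : (Finset.univ.filter fun i : Fin N => x i = 0).card = k) :
    (∑ y ∈ Finset.univ.filter (fun y : Fin N → Fin 4 => ∀ i, y i ≠ 0),
        (-1 : ℤ) ^ (Finset.univ.filter fun i : Fin N => y i = x i).card) = 3 ^ k ∧
    (1 : ℤ) ≤ 3 ^ k := by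
  refine ⟨?_, one_le_pow₀ (by norm_num)⟩
  have hset : Finset.univ.filter (fun y : Fin N → Fin 4 => ∀ i, y i ≠ 0)
      = Fintype.piFinset (fun _ : Fin N => ({1,2,3} : Finset (Fin 4))) := by
    ext y
    simp only [Fintype.mem_piFinset, Finset.mem_filter, Finset.mem_univ, true_and, mem_123_iff]
  have hterm : ∀ y : Fin N → Fin 4,
      (-1 : ℤ) ^ (Finset.univ.filter fun i : Fin N => y i = x i).card
        = ∏ i, (if y i = x i then (-1 : ℤ) else 1) := by
    intro y
    rw [Finset.prod_ite, Finset.prod_const, Finset.prod_const, one_pow, mul_one]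
  rw [hset]
  calc (∑ y ∈ Fintype.piFinset (fun _ : Fin N => ({1,2,3} : Finset (Fin 4))),
        (-1 : ℤ) ^ (Finset.univ.filter fun i : Fin N => y i = x i).card)
      = ∑ y ∈ Fintype.piFinset (fun _ : Fin N => ({1,2,3} : Finset (Fin 4))),
          ∏ i, (if y i = x i then (-1 : ℤ) else 1) := by
        exact Finset.sum_congr rfl fun y _ => hterm y
    _ = ∏ i, ∑ a ∈ ({1,2,3} : Finset (Fin 4)), (if a = x i then (-1 : ℤ) else 1) := by
        rw [Finset.prod_univ_sum]
    _ = ∏ i, (if x i = 0 then (3 : ℤ) else 1) := by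
        exact Finset.prod_congr rfl fun i _ => coord_sum (x i)
    _ = 3 ^ k := by
        rw [Finset.prod_ite, Finset.prod_const, Finset.prod_const, one_pow, mul_one, hk]
end

section
/- Let $\{F^{(1)}_\mu\}$ and $\{F^{(2)}_\nu\}$ be Hermitian orthonormal bases of $M_{d_1}(\mathbb{C})$ and $M_{d_2}(\mathbb{C})$ respectively, and let $\Phi, \Psi$ be $d_1 \times d_2$ complex matrices. Fix an index $k$. Then $\big|\mathrm{Tr}\big(F^{(2)}_k (\Psi^\dagger \Phi)^T\big)\big|^2 \le \sum_\mu \big|\mathrm{Tr}\big(F^{(1)}_\mu \Phi\Psi^\dagger\big)\big|^2 + \sum_{\nu \ne k} \big|\mathrm{Tr}\big(F^{(2)}_\nu (\Psi^\dagger \Phi)^T\big)\big|^2$. -/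
open Matrix

/-!
Expanding in a Hermitian orthonormal basis `F` gives the Parseval identity
`tr (A * B) = ∑ i, tr (F i * A) * tr (F i * B)`, with no complex conjugation because the `F i`
are Hermitian. Hence both sums of squared traces equal `tr (Φ Ψᴴ Φ Ψᴴ) = tr ((Ψᴴ Φ)ᵀ (Ψᴴ Φ)ᵀ)`,
so the `k`-th square is the difference of the two remaining sums, and the triangle inequality
bounds its norm.
-/

namespace Matrix

theorem trace_mul_self_transpose_mul_comm {R m n : Type*} [CommRing R] [Fintype m] [Fintype n]
    (X : Matrix m n R) (Y : Matrix n m R) :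
    ((Y * X)ᵀ * (Y * X)ᵀ).trace = (X * Y * (X * Y)).trace := by
  rw [← transpose_mul, trace_transpose, Matrix.mul_assoc, trace_mul_comm]
  simp only [Matrix.mul_assoc]

variable {K ι m : Type*} [Field K] [Star K] [Fintype ι] [DecidableEq ι] [Fintype m] [DecidableEq m]
  {F : ι → Matrix m m K}

theorem trace_conjTranspose_mul_sum_smul
    (hF : ∀ i j, ((F i)ᴴ * F j).trace = if i = j then 1 else 0) (c : ι → K) (i : ι) :
    ((F i)ᴴ * ∑ j, c j • F j).trace = c i := by
  simp [Finset.mul_sum, trace_sum, hF]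

theorem linearIndependent_of_trace_conjTranspose_mul
    (hF : ∀ i j, ((F i)ᴴ * F j).trace = if i = j then 1 else 0) : LinearIndependent K F :=
  Fintype.linearIndependent_iff.2 fun c hc i => by
    simpa [hc] using (trace_conjTranspose_mul_sum_smul hF c i).symm

theorem sum_trace_conjTranspose_mul_smul
    (hF : ∀ i j, ((F i)ᴴ * F j).trace = if i = j then 1 else 0)
    (hcard : Fintype.card ι = Fintype.card m ^ 2) (A : Matrix m m K) :
    ∑ i, ((F i)ᴴ * A).trace • F i = A := by
  have hspan := (linearIndependent_of_trace_conjTranspose_mul hF).span_eq_top_of_card_eq_finrank'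
    (by rw [hcard, Module.finrank_matrix, Module.finrank_self, mul_one, sq])
  have hA : A ∈ Submodule.span K (Set.range F) := hspan ▸ Submodule.mem_top
  obtain ⟨c, rfl⟩ := (Submodule.mem_span_range_iff_exists_fun K).1 hA
  simp only [trace_conjTranspose_mul_sum_smul hF]

theorem trace_mul_eq_sum_trace_mul_mul_trace_mul
    (hherm : ∀ i, (F i).IsHermitian)
    (hF : ∀ i j, ((F i)ᴴ * F j).trace = if i = j then 1 else 0)
    (hcard : Fintype.card ι = Fintype.card m ^ 2) (A B : Matrix m m K) :
    (A * B).trace = ∑ i, (F i * A).trace * (F i * B).trace := by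
  conv_lhs => rw [← sum_trace_conjTranspose_mul_smul hF hcard A]
  simp [Finset.sum_mul, trace_sum, (hherm _).eq]

end Matrix

theorem norm_sq_le_sum_norm_sq_add_sum_erase_norm_sq {𝕜 ι κ : Type*} [NormedDivisionRing 𝕜]
    [Fintype ι] [Fintype κ] [DecidableEq ι] (z : ι → 𝕜) (w : κ → 𝕜)
    (h : ∑ i, z i ^ 2 = ∑ j, w j ^ 2) (k : ι) :
    ‖z k‖ ^ 2 ≤ ∑ j, ‖w j‖ ^ 2 + ∑ i ∈ Finset.univ.erase k, ‖z i‖ ^ 2 := by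
  have hk : z k ^ 2 = ∑ j, w j ^ 2 - ∑ i ∈ Finset.univ.erase k, z i ^ 2 := by
    rw [← h, ← Finset.add_sum_erase _ _ (Finset.mem_univ k), add_sub_cancel_right]
  calc ‖z k‖ ^ 2 = ‖∑ j, w j ^ 2 - ∑ i ∈ Finset.univ.erase k, z i ^ 2‖ := by rw [← hk, norm_pow]
    _ ≤ ‖∑ j, w j ^ 2‖ + ‖∑ i ∈ Finset.univ.erase k, z i ^ 2‖ := norm_sub_le _ _
    _ ≤ ∑ j, ‖w j‖ ^ 2 + ∑ i ∈ Finset.univ.erase k, ‖z i‖ ^ 2 := by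
      gcongr <;> exact (norm_sum_le _ _).trans_eq (by simp only [norm_pow])

/-- Key triangle inequality: for Hermitian orthonormal bases `{F¹_μ}` of `M_{d₁}(ℂ)`
and `{F²_ν}` of `M_{d₂}(ℂ)` and any `d₁ × d₂` matrices `Φ, Ψ`,
`|Tr(F²_k (Ψᴴ Φ)ᵀ)|² ≤ ∑_μ |Tr(F¹_μ Φ Ψᴴ)|² + ∑_{ν ≠ k} |Tr(F²_ν (Ψᴴ Φ)ᵀ)|²`. -/
theorem triangle_trace_inequality (d1 d2 : ℕ)
    (F1 : Fin (d1 ^ 2) → Matrix (Fin d1) (Fin d1) ℂ)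
    (F2 : Fin (d2 ^ 2) → Matrix (Fin d2) (Fin d2) ℂ)
    (h1herm : ∀ μ, (F1 μ).IsHermitian)
    (h2herm : ∀ ν, (F2 ν).IsHermitian)
    (h1onb : ∀ μ μ', ((F1 μ)ᴴ * F1 μ').trace = if μ = μ' then 1 else 0)
    (h2onb : ∀ ν ν', ((F2 ν)ᴴ * F2 ν').trace = if ν = ν' then 1 else 0)
    (Φ Ψ : Matrix (Fin d1) (Fin d2) ℂ) (k : Fin (d2 ^ 2)) :
    ‖(F2 k * (Ψᴴ * Φ)ᵀ).trace‖ ^ 2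
      ≤ ∑ μ, ‖(F1 μ * (Φ * Ψᴴ)).trace‖ ^ 2
        + ∑ ν ∈ Finset.univ.erase k, ‖(F2 ν * (Ψᴴ * Φ)ᵀ).trace‖ ^ 2 := by
  refine norm_sq_le_sum_norm_sq_add_sum_erase_norm_sq (fun ν => (F2 ν * (Ψᴴ * Φ)ᵀ).trace)
    (fun μ => (F1 μ * (Φ * Ψᴴ)).trace) ?_ k
  simp only [sq, ← trace_mul_eq_sum_trace_mul_mul_trace_mul h1herm h1onb (by simp),
    ← trace_mul_eq_sum_trace_mul_mul_trace_mul h2herm h2onb (by simp),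
    trace_mul_self_transpose_mul_comm]
end

section
/- Let $\Lambda_i[X] = \sum_\mu \lambda^{(i)}_\mu F^{(i)}_\mu X F^{(i)}_\mu$ ($i=1,2$) be maps on $M_{d_i}(\mathbb{C})$ with Hermitian orthonormal diagonal bases $\{F^{(i)}_\mu\}$. Suppose all coefficients $\lambda^{(i)}_\mu$ are nonnegative except one, say $\lambda^{(2)}_k = -|\lambda^{(2)}_k|$, and every nonnegative coefficient is $\ge |\lambda^{(2)}_k|$. Then the map $\Lambda = \Lambda_1 \otimes \mathrm{id}_{d_2} + \mathrm{id}_{d_1} \otimes \Lambda_2$ on $M_{d_1 d_2}(\mathbb{C})$ is positive: $\langle \psi | \Lambda[\,|\phi\rangle\langle\phi|\,] | \psi \rangle \ge 0$ for all $\phi, \psi \in \mathbb{C}^{d_1} \otimes \mathbb{C}^{d_2}$. -/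
/-
Write `φ = vec Φ` and `ψ = vec Ψ`. Each term `(F ⊗ 1)|φ⟩⟨φ|(F ⊗ 1)` contributes
`|⟨ψ|(F ⊗ 1)|φ⟩|²`, so `⟨ψ|Λ[|φ⟩⟨φ|]|ψ⟩ = ∑ λ¹_μ |tr(F¹_μ X)|² + ∑ λ²_ν |tr(F²_ν Z)|²` with
`X = (Ψᴴ Φ)ᵀ` and `Z = Φ Ψᴴ`. By Parseval for the two orthonormal bases the weights sum to the
Frobenius norms `‖X‖²` and `‖Z‖²`, so the form is at least `|λ²_k| (‖X‖² + ‖Z‖² - 2 |tr(F²_k Z)|²)`.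
For Hermitian `G` of unit norm, Cauchy–Schwarz against the Hermitian part of a phase rotation of
`Z` gives `2 |tr(G Z)|² ≤ ‖Z‖² + |tr(Z²)|`, and `|tr(Z²)| = |tr((Ψᴴ Φ)²)| ≤ ‖X‖²`.
-/

open Matrix
open scoped Kronecker

attribute [local instance] Matrix.frobeniusNormedAddCommGroup Matrix.frobeniusNormedSpace

namespace Matrix

variable {m n 𝕜 : Type*} [Fintype m] [Fintype n] [RCLike 𝕜]

lemma frobenius_norm_sq_eq_sum {α : Type*} [NormedAddCommGroup α] (A : Matrix m n α) :
    ‖A‖ ^ 2 = ∑ i, ∑ j, ‖A i j‖ ^ 2 := by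
  rw [frobenius_norm_def, ← Real.rpow_natCast, ← Real.rpow_mul (by positivity)]
  norm_num

lemma norm_toLp_vec (A : Matrix m n 𝕜) : ‖WithLp.toLp 2 (vec A)‖ = ‖A‖ := by
  rw [← sq_eq_sq₀ (norm_nonneg _) (norm_nonneg _), EuclideanSpace.norm_sq_eq,
    frobenius_norm_sq_eq_sum, Fintype.sum_prod_type, Finset.sum_comm]
  rfl

lemma inner_toLp_vec (A B : Matrix m n 𝕜) :
    inner 𝕜 (WithLp.toLp 2 (vec A)) (WithLp.toLp 2 (vec B)) = (Aᴴ * B).trace := by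
  rw [EuclideanSpace.inner_toLp_toLp, dotProduct_comm, star_vec_dotProduct_vec]

lemma ofReal_frobenius_norm_sq (A : Matrix m n 𝕜) : ((‖A‖ ^ 2 : ℝ) : 𝕜) = (Aᴴ * A).trace := by
  rw [← norm_toLp_vec, ← inner_toLp_vec, inner_self_eq_norm_sq_to_K]
  push_cast
  rfl

lemma norm_trace_mul_le (A : Matrix m n 𝕜) (B : Matrix n m 𝕜) :
    ‖(A * B).trace‖ ≤ ‖A‖ * ‖B‖ := by
  simpa only [conjTranspose_conjTranspose, inner_toLp_vec, norm_toLp_vec,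
    frobenius_norm_conjTranspose] using
    norm_inner_le_norm (𝕜 := 𝕜) (WithLp.toLp 2 (vec Aᴴ)) (WithLp.toLp 2 (vec B))

lemma sum_norm_trace_mul_sq {ι : Type*} [Fintype ι] [DecidableEq ι] (F : ι → Matrix m n 𝕜)
    (hF : ∀ μ μ', ((F μ)ᴴ * F μ').trace = if μ = μ' then 1 else 0)
    (hcard : Fintype.card ι = Fintype.card m * Fintype.card n) (X : Matrix n m 𝕜) :
    ∑ μ, ‖(F μ * X).trace‖ ^ 2 = ‖X‖ ^ 2 := by
  have hon : Orthonormal 𝕜 fun μ => WithLp.toLp 2 (vec (F μ)) :=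
    orthonormal_iff_ite.mpr fun μ μ' => by rw [inner_toLp_vec, hF]
  have hfinrank : Fintype.card ι = Module.finrank 𝕜 (EuclideanSpace 𝕜 (n × m)) := by
    rw [finrank_euclideanSpace, Fintype.card_prod, hcard, mul_comm]
  let b := OrthonormalBasis.mk hon
    (hon.linearIndependent.span_eq_top_of_card_eq_finrank' hfinrank).ge
  simpa [b, inner_toLp_vec, norm_toLp_vec, trace_mul_comm (F _)] using
    b.sum_sq_norm_inner_left (WithLp.toLp 2 (vec Xᴴ))

lemma frobenius_norm_add_conjTranspose_sq (A : Matrix n n 𝕜) :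
    ‖A + Aᴴ‖ ^ 2 = 2 * ‖A‖ ^ 2 + 2 * RCLike.re (A * A).trace := by
  have h := congrArg RCLike.re (ofReal_frobenius_norm_sq (A + Aᴴ))
  rw [conjTranspose_add, conjTranspose_conjTranspose, add_mul, mul_add, mul_add, trace_add,
    trace_add, trace_add, trace_mul_comm A Aᴴ, ← conjTranspose_mul, trace_conjTranspose,
    ← ofReal_frobenius_norm_sq] at h
  simp only [RCLike.ofReal_re, map_add, RCLike.star_def, RCLike.conj_re] at h
  linarith

lemma sq_re_trace_mul_le {G : Matrix n n 𝕜} (hG : G.IsHermitian) (A : Matrix n n 𝕜) :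
    2 * RCLike.re (G * A).trace ^ 2 ≤ ‖G‖ ^ 2 * (‖A‖ ^ 2 + RCLike.re (A * A).trace) := by
  have htr : (G * (A + Aᴴ)).trace = 2 * RCLike.re (G * A).trace := by
    rw [mul_add, trace_add, ← hG.eq, ← conjTranspose_mul, trace_conjTranspose, trace_mul_comm A,
      hG.eq, RCLike.star_def, RCLike.add_conj]
  have hcs := norm_trace_mul_le G (A + Aᴴ)
  rw [htr, norm_mul, RCLike.norm_ofReal, RCLike.norm_two] at hcs
  have hsq := pow_le_pow_left₀ (by positivity) hcs 2
  rw [mul_pow, mul_pow, sq_abs, frobenius_norm_add_conjTranspose_sq] at hsq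
  nlinarith

lemma two_mul_norm_trace_mul_sq_le {G : Matrix n n 𝕜} (hG : G.IsHermitian) (A : Matrix n n 𝕜) :
    2 * ‖(G * A).trace‖ ^ 2 ≤ ‖G‖ ^ 2 * (‖A‖ ^ 2 + ‖(A * A).trace‖) := by
  set α := (G * A).trace
  rcases eq_or_ne α 0 with hα | hα
  · rw [hα, norm_zero, zero_pow two_ne_zero, mul_zero]
    positivity
  set c : 𝕜 := star α / ‖α‖
  have hc : ‖c‖ = 1 := by
    simp [c, norm_div, hα]
  have hcα : c * α = ‖α‖ := by
    rw [div_mul_eq_mul_div, RCLike.star_def, RCLike.conj_mul, div_eq_iff (by simpa using hα)]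
    ring
  have h := sq_re_trace_mul_le hG (c • A)
  rw [mul_smul_comm, trace_smul, smul_eq_mul, hcα, RCLike.ofReal_re, norm_smul, hc, one_mul,
    smul_mul_smul_comm, trace_smul, smul_eq_mul] at h
  have hre : RCLike.re (c * c * (A * A).trace) ≤ ‖(A * A).trace‖ := by
    refine (RCLike.re_le_norm _).trans ?_
    rw [norm_mul, norm_mul, hc]; simp
  nlinarith [sq_nonneg ‖G‖]

lemma two_mul_norm_trace_mul_mul_conjTranspose_sq_le {G : Matrix n n 𝕜} (hG : G.IsHermitian)
    (hG1 : (Gᴴ * G).trace = 1) (Φ Ψ : Matrix n m 𝕜) :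
    2 * ‖(G * (Φ * Ψᴴ)).trace‖ ^ 2 ≤ ‖Ψᴴ * Φ‖ ^ 2 + ‖Φ * Ψᴴ‖ ^ 2 := by
  have hnorm : ‖G‖ ^ 2 = 1 :=
    RCLike.ofReal_inj (K := 𝕜).mp <| by rw [ofReal_frobenius_norm_sq, hG1, RCLike.ofReal_one]
  have hsquare : ((Φ * Ψᴴ) * (Φ * Ψᴴ)).trace = ((Ψᴴ * Φ) * (Ψᴴ * Φ)).trace := by
    rw [Matrix.mul_assoc, trace_mul_comm]
    simp only [Matrix.mul_assoc]
  calc 2 * ‖(G * (Φ * Ψᴴ)).trace‖ ^ 2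
      ≤ ‖G‖ ^ 2 * (‖Φ * Ψᴴ‖ ^ 2 + ‖((Φ * Ψᴴ) * (Φ * Ψᴴ)).trace‖) :=
        two_mul_norm_trace_mul_sq_le hG _
    _ ≤ ‖Ψᴴ * Φ‖ ^ 2 + ‖Φ * Ψᴴ‖ ^ 2 := by
        rw [hnorm, one_mul, hsquare, sq]
        linarith [norm_trace_mul_le (Ψᴴ * Φ) (Ψᴴ * Φ)]

lemma star_dotProduct_mul_vecMulVec_mul_mulVec {ι κ : Type*} [Fintype ι] [Fintype κ]
    (T : Matrix ι κ 𝕜) (φ : κ → 𝕜) (ψ : ι → 𝕜) :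
    star ψ ⬝ᵥ (T * vecMulVec φ (star φ) * Tᴴ) *ᵥ ψ = (‖star ψ ⬝ᵥ T *ᵥ φ‖ ^ 2 : ℝ) := by
  have h : star (T *ᵥ φ) ⬝ᵥ ψ = star (star ψ ⬝ᵥ T *ᵥ φ) := by
    rw [← star_dotProduct_star, star_star]
  rw [mul_vecMulVec, vecMulVec_mul, ← star_mulVec, vecMulVec_mulVec, dotProduct_smul,
    op_smul_eq_mul, h, RCLike.star_def, RCLike.mul_conj]
  push_cast
  rfl

section Kronecker

variable {R : Type*} [CommSemiring R] [StarRing R]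

lemma star_vec_dotProduct_kronecker_one_mulVec [DecidableEq n] (A : Matrix m m R)
    (Φ Ψ : Matrix n m R) : star (vec Ψ) ⬝ᵥ (A ⊗ₖ 1) *ᵥ vec Φ = (A * (Ψᴴ * Φ)ᵀ).trace := by
  rw [kronecker_mulVec_vec, star_vec_dotProduct_vec, Matrix.one_mul, ← Matrix.mul_assoc,
    ← trace_transpose, transpose_mul, transpose_transpose]

lemma star_vec_dotProduct_one_kronecker_mulVec [DecidableEq m] (B : Matrix n n R)
    (Φ Ψ : Matrix n m R) : star (vec Ψ) ⬝ᵥ (1 ⊗ₖ B) *ᵥ vec Φ = (B * (Φ * Ψᴴ)).trace := by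
  rw [kronecker_mulVec_vec, star_vec_dotProduct_vec, transpose_one, Matrix.mul_one,
    trace_mul_comm, Matrix.mul_assoc]

lemma kronecker_one_mul_vecMulVec_mul [DecidableEq n] (A : Matrix m m R) (φ : m × n → R) :
    (A ⊗ₖ 1) * vecMulVec φ (star φ) * (A ⊗ₖ 1) =
      of fun p q => ∑ a, ∑ c, A p.1 a * φ (a, p.2) * star (φ (c, q.2)) * A c q.1 := by
  ext p q
  rw [mul_vecMulVec, vecMulVec_mul, vecMulVec_apply, of_apply]
  simp [mulVec, vecMul, dotProduct, Fintype.sum_prod_type, one_apply, Finset.sum_mul_sum,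
    mul_assoc]

lemma one_kronecker_mul_vecMulVec_mul [DecidableEq m] (B : Matrix n n R) (φ : m × n → R) :
    (1 ⊗ₖ B) * vecMulVec φ (star φ) * (1 ⊗ₖ B) =
      of fun p q => ∑ b, ∑ e, B p.2 b * φ (p.1, b) * star (φ (q.1, e)) * B e q.2 := by
  ext p q
  rw [mul_vecMulVec, vecMulVec_mul, vecMulVec_apply, of_apply]
  simp [mulVec, vecMul, dotProduct, Fintype.sum_prod_type, one_apply, Finset.sum_mul_sum,
    mul_assoc]

end Kronecker

end Matrix

lemma star_vec_dotProduct_mulVec_eq_sum_norm_sq {m n ι κ : Type*} [Fintype m] [Fintype n]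
    [DecidableEq m] [DecidableEq n] [Fintype ι] [Fintype κ]
    (F1 : ι → Matrix m m ℂ) (F2 : κ → Matrix n n ℂ)
    (h1herm : ∀ μ, (F1 μ).IsHermitian) (h2herm : ∀ ν, (F2 ν).IsHermitian)
    (lam1 : ι → ℝ) (lam2 : κ → ℝ) (Φ Ψ : Matrix n m ℂ) :
    star (vec Ψ) ⬝ᵥ (of fun p q =>
        (∑ μ, (lam1 μ : ℂ) *
          ∑ a, ∑ c, F1 μ p.1 a * vec Φ (a, p.2) * star (vec Φ (c, q.2)) * F1 μ c q.1)
        + (∑ ν, (lam2 ν : ℂ) *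
          ∑ b, ∑ e, F2 ν p.2 b * vec Φ (p.1, b) * star (vec Φ (q.1, e)) * F2 ν e q.2)) *ᵥ vec Ψ =
      ((∑ μ, lam1 μ * ‖(F1 μ * (Ψᴴ * Φ)ᵀ).trace‖ ^ 2 +
        ∑ ν, lam2 ν * ‖(F2 ν * (Φ * Ψᴴ)).trace‖ ^ 2 : ℝ) : ℂ) := by
  trans star (vec Ψ) ⬝ᵥ
    (∑ μ, (lam1 μ : ℂ) • ((F1 μ ⊗ₖ 1) * vecMulVec (vec Φ) (star (vec Φ)) * (F1 μ ⊗ₖ 1)ᴴ) +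
      ∑ ν, (lam2 ν : ℂ) • ((1 ⊗ₖ F2 ν) * vecMulVec (vec Φ) (star (vec Φ)) * (1 ⊗ₖ F2 ν)ᴴ)) *ᵥ
      vec Ψ
  · simp only [conjTranspose_kronecker, conjTranspose_one, (h1herm _).eq, (h2herm _).eq,
      kronecker_one_mul_vecMulVec_mul, one_kronecker_mul_vecMulVec_mul]
    congr 2
    ext p q
    simp [Matrix.sum_apply]
  rw [add_mulVec, dotProduct_add, sum_mulVec, sum_mulVec, dotProduct_sum, dotProduct_sum]
  simp only [smul_mulVec, dotProduct_smul, star_dotProduct_mul_vecMulVec_mul_mulVec,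
    star_vec_dotProduct_kronecker_one_mulVec, star_vec_dotProduct_one_kronecker_mulVec]
  push_cast
  rfl

lemma sum_mul_add_sum_mul_nonneg {ι κ : Type*} [Fintype ι] [Fintype κ] (l a : ι → ℝ)
    (l' b : κ → ℝ) (k : κ) (ha : ∀ i, 0 ≤ a i) (hb : ∀ j, 0 ≤ b j) (hk : l' k ≤ 0)
    (hl : ∀ i, |l' k| ≤ l i) (hl' : ∀ j, j ≠ k → |l' k| ≤ l' j)
    (hbk : 2 * b k ≤ ∑ i, a i + ∑ j, b j) :
    0 ≤ ∑ i, l i * a i + ∑ j, l' j * b j := by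
  classical
  rw [abs_of_nonpos hk] at hl hl'
  have hsuma : -l' k * ∑ i, a i ≤ ∑ i, l i * a i := by
    rw [Finset.mul_sum]
    gcongr with i
    · exact ha i
    · exact hl i
  have hsumb :
      -l' k * ∑ j ∈ Finset.univ.erase k, b j ≤ ∑ j ∈ Finset.univ.erase k, l' j * b j := by
    rw [Finset.mul_sum]
    gcongr with j hj
    · exact hb j
    · exact hl' j (Finset.ne_of_mem_erase hj)
  rw [← Finset.add_sum_erase _ _ (Finset.mem_univ k)] at hbk ⊢
  have hrest : 0 ≤ ∑ i, a i + ∑ j ∈ Finset.univ.erase k, b j - b k := by linarith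
  nlinarith [mul_nonneg (neg_nonneg.mpr hk) hrest]

theorem sum_map_positive_general (d1 d2 : ℕ)
    (F1 : Fin (d1 ^ 2) → Matrix (Fin d1) (Fin d1) ℂ)
    (F2 : Fin (d2 ^ 2) → Matrix (Fin d2) (Fin d2) ℂ)
    (h1herm : ∀ μ, (F1 μ).IsHermitian)
    (h2herm : ∀ ν, (F2 ν).IsHermitian)
    (h1onb : ∀ μ μ', ((F1 μ)ᴴ * F1 μ').trace = if μ = μ' then 1 else 0)
    (h2onb : ∀ ν ν', ((F2 ν)ᴴ * F2 ν').trace = if ν = ν' then 1 else 0)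
    (lam1 : Fin (d1 ^ 2) → ℝ) (lam2 : Fin (d2 ^ 2) → ℝ) (k : Fin (d2 ^ 2))
    (hkneg : lam2 k ≤ 0)
    (h1bd : ∀ μ, |lam2 k| ≤ lam1 μ)
    (h2bd : ∀ ν, ν ≠ k → |lam2 k| ≤ lam2 ν)
    (φ ψ : Fin d1 × Fin d2 → ℂ) :
    let M : Matrix (Fin d1 × Fin d2) (Fin d1 × Fin d2) ℂ :=
      Matrix.of fun p q =>
        (∑ μ, (lam1 μ : ℂ) *
          ∑ a, ∑ c, F1 μ p.1 a * φ (a, p.2) * star (φ (c, q.2)) * F1 μ c q.1)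
        + (∑ ν, (lam2 ν : ℂ) *
          ∑ b, ∑ e, F2 ν p.2 b * φ (p.1, b) * star (φ (q.1, e)) * F2 ν e q.2)
    0 ≤ (star ψ ⬝ᵥ M.mulVec ψ).re ∧ (star ψ ⬝ᵥ M.mulVec ψ).im = 0 := by
  intro M
  obtain ⟨Φ, rfl⟩ := vec_bijective.surjective φ
  obtain ⟨Ψ, rfl⟩ := vec_bijective.surjective ψ
  rw [star_vec_dotProduct_mulVec_eq_sum_norm_sq F1 F2 h1herm h2herm lam1 lam2 Φ Ψ,
    Complex.ofReal_re, Complex.ofReal_im]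
  refine ⟨sum_mul_add_sum_mul_nonneg _ _ _ _ k (fun _ => by positivity) (fun _ => by positivity)
    hkneg h1bd h2bd ?_, rfl⟩
  rw [sum_norm_trace_mul_sq F1 h1onb (by simp [sq]),
    sum_norm_trace_mul_sq F2 h2onb (by simp [sq]), frobenius_norm_transpose]
  exact two_mul_norm_trace_mul_mul_conjTranspose_sq_le (h2herm k) ((h2onb k k).trans (if_pos rfl))
    Φ Ψ

/-- Theorem 3 of the paper: `Λ = Λ₁ ⊗ id + id ⊗ Λ₂` with Hermitian diagonal bases,
all coefficients nonnegative except one (`λ²_k ≤ 0`), every nonnegative coefficient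
`≥ |λ²_k|`, is a positive map: `⟨ψ|Λ[|φ⟩⟨φ|]|ψ⟩ ≥ 0` for all `φ, ψ`. -/
theorem sum_map_positive (d1 d2 : ℕ)
    (F1 : Fin (d1 ^ 2) → Matrix (Fin d1) (Fin d1) ℂ)
    (F2 : Fin (d2 ^ 2) → Matrix (Fin d2) (Fin d2) ℂ)
    (h1herm : ∀ μ, (F1 μ).IsHermitian)
    (h2herm : ∀ ν, (F2 ν).IsHermitian)
    (h1onb : ∀ μ μ', ((F1 μ)ᴴ * F1 μ').trace = if μ = μ' then 1 else 0)
    (h2onb : ∀ ν ν', ((F2 ν)ᴴ * F2 ν').trace = if ν = ν' then 1 else 0)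
    (lam1 : Fin (d1 ^ 2) → ℝ) (lam2 : Fin (d2 ^ 2) → ℝ) (k : Fin (d2 ^ 2))
    (h1pos : ∀ μ, 0 ≤ lam1 μ)
    (h2pos : ∀ ν, ν ≠ k → 0 ≤ lam2 ν)
    (hkneg : lam2 k ≤ 0)
    (h1bd : ∀ μ, |lam2 k| ≤ lam1 μ)
    (h2bd : ∀ ν, ν ≠ k → |lam2 k| ≤ lam2 ν)
    (φ ψ : Fin d1 × Fin d2 → ℂ) :
    let M : Matrix (Fin d1 × Fin d2) (Fin d1 × Fin d2) ℂ :=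
      Matrix.of fun p q =>
        (∑ μ, (lam1 μ : ℂ) *
          ∑ a, ∑ c, F1 μ p.1 a * φ (a, p.2) * star (φ (c, q.2)) * F1 μ c q.1)
        + (∑ ν, (lam2 ν : ℂ) *
          ∑ b, ∑ e, F2 ν p.2 b * φ (p.1, b) * star (φ (q.1, e)) * F2 ν e q.2)
    0 ≤ (star ψ ⬝ᵥ M.mulVec ψ).re ∧ (star ψ ⬝ᵥ M.mulVec ψ).im = 0 :=
  sum_map_positive_general d1 d2 F1 F2 h1herm h2herm h1onb h2onb lam1 lam2 k hkneg h1bd h2bd φ ψ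
end
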